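/- arXiv:1208.4902 — 2 statements merged into one kernel-verified Lean document; each statement's English description precedes it below -/
import Mathlib

section
/- Let R be a discrete valuation ring with uniformizer p, and A a finitely generated torsion R-module. For elements a, b ∈ A: if h(pⁱa) ≤ h(pⁱb) for all i ≥ 0 then the map pⁱa ↦ pⁱb extends R-linearly to a well-defined height-increasing homomorphism from the cyclic submodule Ra to Rb sending a to b. (In particular, if the Ulm sequence of b dominates that of a termwise, then ra = 0 implies rb = 0 for all r ∈ R.) -/
/-!
Some power `p ^ N` kills `A`, so `0` is the only element of infinite height, and `p ^ k • a = 0`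
forces `p ^ k • b = 0`. Every nonzero scalar is a unit times a power of `p`, and units preserve
heights, so both comparisons extend from powers of `p` to all of `R`. In particular the annihilator
of `a` lies in that of `b`, which makes `r • a ↦ r • b` well defined on `R ∙ a ≃ R ⧸ ann a`.
-/

noncomputable def pHeight {R A : Type*} [CommRing R] [AddCommGroup A] [Module R A]
    (p : R) (a : A) : ℕ∞ :=
  ⨆ (n : ℕ) (_ : ∃ y : A, a = p ^ n • y), (n : ℕ∞)

section pHeight

variable {R A : Type*} [CommRing R] [AddCommGroup A] [Module R A] (p : R)

lemma pHeight_le_pHeight_smul (r : R) (x : A) : pHeight p x ≤ pHeight p (r • x) :=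
  iSup₂_le fun n ⟨y, hy⟩ =>
    le_iSup₂ (f := fun (n : ℕ) (_ : ∃ z : A, r • x = p ^ n • z) => (n : ℕ∞)) n
      ⟨r • y, by rw [hy, smul_comm]⟩

lemma pHeight_units_smul (u : Rˣ) (x : A) : pHeight p ((u : R) • x) = pHeight p x := by
  refine le_antisymm ?_ (pHeight_le_pHeight_smul p _ x)
  simpa only [smul_smul, Units.inv_mul, one_smul] using
    pHeight_le_pHeight_smul p (u⁻¹ : Rˣ) ((u : R) • x)

@[simp]
lemma pHeight_zero : pHeight p (0 : A) = ⊤ := by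
  refine eq_top_iff.mpr ?_
  rw [← ENat.iSup_natCast]
  exact iSup_le fun n =>
    le_iSup₂ (f := fun (n : ℕ) (_ : ∃ y : A, (0 : A) = p ^ n • y) => (n : ℕ∞)) n
      ⟨0, (smul_zero _).symm⟩

variable {p} in
lemma pHeight_le_of_ne_zero {N : ℕ} (hN : ∀ y : A, p ^ N • y = 0) {x : A} (hx : x ≠ 0) :
    pHeight p x ≤ N := by
  refine iSup₂_le fun n ⟨y, hy⟩ => ?_
  by_contra! hlt
  have hNn : N ≤ n := by exact_mod_cast hlt.le
  rw [hy, ← Nat.sub_add_cancel hNn, pow_add, mul_smul, hN] at hx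
  exact hx (smul_zero _)

variable {p} in
lemma eq_zero_of_pHeight_eq_top {N : ℕ} (hN : ∀ y : A, p ^ N • y = 0) {x : A}
    (hx : pHeight p x = ⊤) : x = 0 := by
  by_contra hx0
  exact ENat.natCast_ne_top N (top_le_iff.mp (hx ▸ pHeight_le_of_ne_zero hN hx0))

end pHeight

lemma exists_linearMap_span_singleton_apply_smul {R M : Type*} [CommRing R] [AddCommGroup M]
    [Module R M] {a b : M} (h : ∀ r : R, r • a = 0 → r • b = 0) :
    ∃ φ : ↥(R ∙ a) →ₗ[R] M,
      (∀ r : R, φ ⟨r • a, Submodule.smul_mem _ r (Submodule.mem_span_singleton_self a)⟩ = r • b) ∧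
      LinearMap.range φ = R ∙ b := by
  let e := Ideal.quotTorsionOfEquivSpanSingleton R M a
  have hker : Ideal.torsionOf R M a ≤ LinearMap.ker (LinearMap.toSpanSingleton R M b) :=
    fun r hr => h r hr
  refine ⟨Submodule.liftQ _ _ hker ∘ₗ e.symm.toLinearMap, fun r => ?_, ?_⟩
  · have he : e.symm ⟨r • a, _⟩ = Submodule.Quotient.mk r :=
      e.symm_apply_eq.mpr (Ideal.quotTorsionOfEquivSpanSingleton_apply_mk a r).symm
    rw [LinearMap.comp_apply, LinearEquiv.coe_coe, he, Submodule.liftQ_apply,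
      LinearMap.toSpanSingleton_apply]
  · rw [LinearMap.range_comp_of_range_eq_top _ (LinearEquiv.range _), Submodule.range_liftQ,
      LinearMap.range_toSpanSingleton]

section DVR

variable {R : Type*} [CommRing R] [IsDomain R] [IsDiscreteValuationRing R] {p : R}
  (hp : Irreducible p)
include hp

lemma exists_pow_smul_eq_zero_of_isTorsion {A : Type*} [AddCommGroup A] [Module R A]
    [Module.Finite R A] (htor : Module.IsTorsion R A) : ∃ N : ℕ, ∀ x : A, p ^ N • x = 0 := by
  obtain ⟨r, hrann, hr⟩ := Submodule.annihilator_top_inter_nonZeroDivisors htor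
  obtain ⟨N, u, rfl⟩ :=
    IsDiscreteValuationRing.eq_unit_mul_pow_irreducible (nonZeroDivisors.ne_zero hr) hp
  refine ⟨N, fun x => ?_⟩
  have hx := Submodule.mem_annihilator.mp hrann x Submodule.mem_top
  rwa [mul_smul, u.isUnit.smul_eq_zero] at hx

lemma smul_eq_zero_of_pow_smul_eq_zero {A : Type*} [AddCommGroup A] [Module R A] {a b : A}
    (h : ∀ k : ℕ, p ^ k • a = 0 → p ^ k • b = 0) {r : R} (hr : r • a = 0) : r • b = 0 := by
  rcases eq_or_ne r 0 with rfl | hr0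
  · exact zero_smul R b
  obtain ⟨k, u, rfl⟩ := IsDiscreteValuationRing.eq_unit_mul_pow_irreducible hr0 hp
  rw [mul_smul, u.isUnit.smul_eq_zero] at hr ⊢
  exact h k hr

lemma pHeight_smul_le_of_pow {A : Type*} [AddCommGroup A] [Module R A] {a b : A}
    (h : ∀ k : ℕ, pHeight p (p ^ k • a) ≤ pHeight p (p ^ k • b)) (r : R) :
    pHeight p (r • a) ≤ pHeight p (r • b) := by
  rcases eq_or_ne r 0 with rfl | hr0
  · simp
  obtain ⟨k, u, rfl⟩ := IsDiscreteValuationRing.eq_unit_mul_pow_irreducible hr0 hp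
  rw [mul_smul, mul_smul, pHeight_units_smul, pHeight_units_smul]
  exact h k

end DVR

/-- if the Ulm sequence of b dominates that of a termwise, then
a ↦ b extends to a well-defined height-increasing homomorphism Ra → Rb; in
particular ra = 0 implies rb = 0. -/
theorem cyclic_hom_of_ulm_domination {R A : Type*} [CommRing R] [IsDomain R]
    [IsDiscreteValuationRing R] [AddCommGroup A] [Module R A]
    [Module.Finite R A] (htor : Module.IsTorsion R A)
    (p : R) (hp : Irreducible p) (a b : A)
    (hdom : ∀ i : ℕ, pHeight p (p ^ i • a) ≤ pHeight p (p ^ i • b)) :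
    (∀ r : R, r • a = 0 → r • b = 0) ∧
    ∃ φ : ↥(Submodule.span R ({a} : Set A)) →ₗ[R] A,
      (∀ x : ↥(Submodule.span R ({a} : Set A)), pHeight p (x : A) ≤ pHeight p (φ x)) ∧
      φ ⟨a, Submodule.mem_span_singleton_self a⟩ = b ∧
      LinearMap.range φ = Submodule.span R ({b} : Set A) := by
  obtain ⟨N, hN⟩ := exists_pow_smul_eq_zero_of_isTorsion hp htor
  have hann : ∀ r : R, r • a = 0 → r • b = 0 := fun r =>
    smul_eq_zero_of_pow_smul_eq_zero hp fun k hk =>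
      eq_zero_of_pHeight_eq_top hN (by simpa [hk] using hdom k)
  obtain ⟨φ, hφ, hrange⟩ := exists_linearMap_span_singleton_apply_smul hann
  refine ⟨hann, φ, ?_, by simpa using hφ 1, hrange⟩
  rintro ⟨x, hx⟩
  obtain ⟨r, rfl⟩ := Submodule.mem_span_singleton.mp hx
  rw [hφ]
  exact pHeight_smul_le_of_pow hp hdom r
end

section
/- Let R be a discrete valuation ring and A a finite torsion R-module of exponent p^k. Elements a, b ∈ A satisfy: a and b degenerate to each other (via endomorphisms of A) if and only if h(pⁱa) = h(pⁱb) for all 0 ≤ i ≤ k. -/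
/-!
Endomorphisms cannot lower `p`-heights, which gives one direction; beyond `k` all heights are
`⊤` since `p ^ k` kills `A`. Conversely, by the structure theorem `A ≅ ⨁ R ⧸ (p ^ e j)`, and it
suffices to send `a` to each coordinate `b j = u p ^ d` of `b`. For `i = e j - d - 1` the element
`p ^ i • b` has nonzero `j`-th coordinate, so its height, hence that of `p ^ i • a`, is `< e j`:
some coordinate `a l = v p ^ c` has `p ^ i • a l` not divisible by `p ^ e j`. This forces
`c ≤ d` and `e j - d ≤ e l - c`, which is exactly what makes multiplication by
`u v⁻¹ p ^ (d - c)` a well-defined map `R ⧸ (p ^ e l) → R ⧸ (p ^ e j)` sending `a l` to `b j`.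
-/

open DirectSum Submodule

section pHeight

variable {R A B : Type*} [CommRing R] [AddCommGroup A] [Module R A] [AddCommGroup B]
  [Module R B] {p : R}

theorem natCast_le_pHeight_iff {a : A} {n : ℕ} :
    (n : ℕ∞) ≤ pHeight p a ↔ ∃ y, a = p ^ n • y := by
  refine ⟨fun h => ?_, fun h => le_iSup₂_of_le n h le_rfl⟩
  cases n with
  | zero => exact ⟨a, by rw [pow_zero, one_smul]⟩
  | succ n =>
    have hlt : (n : ℕ∞) < pHeight p a := lt_of_lt_of_le (by exact_mod_cast n.lt_succ_self) h
    obtain ⟨m, hm⟩ := lt_iSup_iff.mp hlt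
    obtain ⟨⟨y, rfl⟩, hnm⟩ := lt_iSup_iff.mp hm
    refine ⟨p ^ (m - (n + 1)) • y, ?_⟩
    rw [smul_smul, ← pow_add, Nat.add_sub_cancel' (by exact_mod_cast Order.add_one_le_of_lt hnm)]

theorem pHeight_le_pHeight_map (f : A →ₗ[R] B) (a : A) : pHeight p a ≤ pHeight p (f a) :=
  iSup₂_le fun _ ⟨y, hy⟩ => natCast_le_pHeight_iff.mpr ⟨f y, by rw [hy, map_smul]⟩

theorem pHeight_map_linearEquiv (e : A ≃ₗ[R] B) (a : A) : pHeight p (e a) = pHeight p a :=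
  le_antisymm (by simpa using pHeight_le_pHeight_map (e.symm : B →ₗ[R] A) (e a))
    (pHeight_le_pHeight_map (e : A →ₗ[R] B) a)

end pHeight

section Cyclic

variable {R : Type*} [CommRing R] {p : R}

theorem smul_eq_zero_of_quotient_span_singleton (r : R) (x : R ⧸ R ∙ r) : r • x = 0 :=
  (Module.isTorsionBy_quotient_iff _ _).mpr
    (fun y => Ideal.mul_mem_right y _ (Ideal.mem_span_singleton_self _)) (x := x)

theorem exists_mk_mul_pow_eq_pow_smul (r : R) {m n c : ℕ} (h : n ≤ c ∨ m ≤ c) :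
    ∃ z : R ⧸ R ∙ p ^ m, Submodule.Quotient.mk (r * p ^ c) = p ^ n • z := by
  rcases h with hn | hm
  · refine ⟨Submodule.Quotient.mk (r * p ^ (c - n)), ?_⟩
    rw [← Submodule.Quotient.mk_smul, smul_eq_mul, mul_left_comm, pow_mul_pow_sub p hn]
  · refine ⟨0, ?_⟩
    rw [smul_zero, Submodule.Quotient.mk_eq_zero, mem_span_singleton]
    exact ⟨r * p ^ (c - m), by rw [smul_eq_mul, mul_assoc, pow_sub_mul_pow p hm]⟩

theorem exists_linearMap_mk_eq_mk_mul {a b t : R} (h : b ∣ a * t) :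
    ∃ f : (R ⧸ R ∙ a) →ₗ[R] R ⧸ R ∙ b,
      ∀ r : R, f (Submodule.Quotient.mk r) = Submodule.Quotient.mk (r * t) := by
  obtain ⟨s, hs⟩ := h
  have hle : R ∙ a ≤ (R ∙ b).comap (LinearMap.toSpanSingleton R R t) := by
    rw [span_singleton_le_iff_mem, mem_comap, LinearMap.toSpanSingleton_apply,
      mem_span_singleton]
    exact ⟨s, by rw [smul_eq_mul, smul_eq_mul, hs, mul_comm]⟩
  exact ⟨mapQ _ _ _ hle, fun r => rfl⟩

variable [IsDomain R]

theorem mk_unit_mul_pow_eq_zero_iff (hp : Irreducible p) (u : Rˣ) {m c : ℕ} :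
    (Submodule.Quotient.mk ((u : R) * p ^ c) : R ⧸ R ∙ p ^ m) = 0 ↔ m ≤ c := by
  rw [Submodule.Quotient.mk_eq_zero, mem_span_singleton]
  refine ⟨fun ⟨s, hs⟩ => ?_, fun h => ⟨u * p ^ (c - m), ?_⟩⟩
  · have : p ^ m ∣ u * p ^ c := ⟨s, by rw [← hs, smul_eq_mul, mul_comm]⟩
    exact (pow_dvd_pow_iff hp.ne_zero hp.not_isUnit).mp (Units.dvd_mul_left.mp this)
  · rw [smul_eq_mul, mul_assoc, pow_sub_mul_pow p h]

variable [IsDiscreteValuationRing R]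

theorem exists_unit_mul_pow_of_ne_zero (hp : Irreducible p) {m : ℕ} {x : R ⧸ R ∙ p ^ m}
    (hx : x ≠ 0) : ∃ c < m, ∃ u : Rˣ, x = Submodule.Quotient.mk ((u : R) * p ^ c) := by
  obtain ⟨r, rfl⟩ := Submodule.Quotient.mk_surjective _ x
  have hr : r ≠ 0 := by
    rintro rfl
    exact hx (Submodule.Quotient.mk_zero _)
  obtain ⟨c, u, rfl⟩ := IsDiscreteValuationRing.eq_unit_mul_pow_irreducible hr hp
  refine ⟨c, ?_, u, rfl⟩
  by_contra! hmc
  exact hx ((mk_unit_mul_pow_eq_zero_iff hp u).mpr hmc)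

theorem exists_linearMap_apply_eq_mk_unit_mul_pow (hp : Irreducible p) {m n d : ℕ} (u : Rˣ)
    {x : R ⧸ R ∙ p ^ m} (hx : ¬∃ z, p ^ (n - d - 1) • x = p ^ n • z) :
    ∃ f : (R ⧸ R ∙ p ^ m) →ₗ[R] R ⧸ R ∙ p ^ n,
      f x = Submodule.Quotient.mk ((u : R) * p ^ d) := by
  set i := n - d - 1
  have hx0 : x ≠ 0 := by
    rintro rfl
    exact hx ⟨0, by rw [smul_zero, smul_zero]⟩
  obtain ⟨c, -, v, rfl⟩ := exists_unit_mul_pow_of_ne_zero hp hx0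
  have hpx : p ^ i • (Submodule.Quotient.mk ((v : R) * p ^ c) : R ⧸ R ∙ p ^ m) =
      Submodule.Quotient.mk ((v : R) * p ^ (c + i)) := by
    rw [← Submodule.Quotient.mk_smul, smul_eq_mul, pow_add]
    congr 1
    ring
  have hci : c + i < n ∧ c + i < m := by
    by_contra! h
    rw [hpx] at hx
    exact hx (exists_mk_mul_pow_eq_pow_smul _ (by omega))
  have hdvd : p ^ n ∣ p ^ m * ((u : R) * ↑v⁻¹ * p ^ (d - c)) :=
    ⟨u * ↑v⁻¹ * p ^ (m + (d - c) - n), by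
      rw [mul_left_comm, mul_left_comm (p ^ n), ← pow_add, pow_mul_pow_sub p (by omega)]⟩
  obtain ⟨f, hf⟩ := exists_linearMap_mk_eq_mk_mul hdvd
  refine ⟨f, ?_⟩
  rw [hf]
  congr 1
  calc (v : R) * p ^ c * (u * ↑v⁻¹ * p ^ (d - c))
      = u * (v * ↑v⁻¹) * (p ^ c * p ^ (d - c)) := by ring
    _ = u * p ^ d := by rw [Units.mul_inv, mul_one, pow_mul_pow_sub p (by omega)]

end Cyclic

theorem DirectSum.exists_eq_smul_of_forall_apply_eq_smul {R ι : Type*} [Semiring R] [Fintype ι]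
    {M : ι → Type*} [∀ i, AddCommMonoid (M i)] [∀ i, Module R (M i)] {r : R}
    {x : ⨁ i, M i} (h : ∀ i, ∃ z, x i = r • z) : ∃ y : ⨁ i, M i, x = r • y := by
  choose z hz using h
  refine ⟨DFinsupp.equivFunOnFintype.symm z, DFinsupp.ext fun i => ?_⟩
  rw [hz, DirectSum.smul_apply]
  rfl

section DVR

variable {R : Type*} [CommRing R] [IsDomain R] [IsDiscreteValuationRing R] {p : R}

theorem exists_linearMap_apply_eq_of_pHeight_le_directSum (hp : Irreducible p)
    {ι : Type*} [Fintype ι] [DecidableEq ι] {e : ι → ℕ} {a b : ⨁ j, R ⧸ R ∙ p ^ e j}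
    (hle : ∀ i : ℕ, pHeight p (p ^ i • a) ≤ pHeight p (p ^ i • b)) :
    ∃ φ : (⨁ j, R ⧸ R ∙ p ^ e j) →ₗ[R] ⨁ j, R ⧸ R ∙ p ^ e j, φ a = b := by
  suffices h : ∀ j, ∃ φ : (⨁ j, R ⧸ R ∙ p ^ e j) →ₗ[R] ⨁ j, R ⧸ R ∙ p ^ e j,
      φ a = lof R ι _ j (b j) by
    choose φ hφ using h
    refine ⟨∑ j, φ j, ?_⟩
    rw [LinearMap.sum_apply, Finset.sum_congr rfl fun j _ => hφ j]
    exact sum_univ_of b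
  intro j
  by_cases hbj : b j = 0
  · exact ⟨0, by rw [LinearMap.zero_apply, hbj, map_zero]⟩
  obtain ⟨d, hd, u, hbj⟩ := exists_unit_mul_pow_of_ne_zero hp hbj
  set i := e j - d - 1
  have hpb : (p ^ i • b) j ≠ 0 := by
    rw [DirectSum.smul_apply, hbj, ← Submodule.Quotient.mk_smul, smul_eq_mul, mul_left_comm,
      ← pow_add, Ne, mk_unit_mul_pow_eq_zero_iff hp]
    omega
  have hpa : ¬∃ y, p ^ i • a = p ^ e j • y := by
    intro hy
    obtain ⟨y, hy⟩ :=
      natCast_le_pHeight_iff.mp ((natCast_le_pHeight_iff.mpr hy).trans (hle i))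
    exact hpb (by rw [hy, DirectSum.smul_apply, smul_eq_zero_of_quotient_span_singleton])
  obtain ⟨l, hl⟩ : ∃ l, ¬∃ z, (p ^ i • a) l = p ^ e j • z := by
    by_contra! h
    exact hpa (exists_eq_smul_of_forall_apply_eq_smul h)
  rw [DirectSum.smul_apply] at hl
  obtain ⟨f, hf⟩ := exists_linearMap_apply_eq_mk_unit_mul_pow hp u hl
  refine ⟨lof R ι _ j ∘ₗ f ∘ₗ component R ι _ l, ?_⟩
  rw [LinearMap.comp_apply, LinearMap.comp_apply, ← apply_eq_component, hf, ← hbj]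

theorem exists_linearMap_apply_eq_of_pHeight_le (hp : Irreducible p) {A : Type*}
    [AddCommGroup A] [Module R A] [Module.Finite R A] (hA : Module.IsTorsion R A) {a b : A}
    (hle : ∀ i : ℕ, pHeight p (p ^ i • a) ≤ pHeight p (p ^ i • b)) :
    ∃ φ : A →ₗ[R] A, φ a = b := by
  classical
  obtain ⟨ι, _, q, hq, e, ⟨g⟩⟩ := Module.equiv_directSum_of_isTorsion hA
  have hspan : ∀ j, R ∙ q j ^ e j = R ∙ p ^ e j := fun j =>
    Ideal.span_singleton_eq_span_singleton.mpr
      (IsDiscreteValuationRing.associated_of_irreducible R (hq j) hp).pow_pow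
  let g' : A ≃ₗ[R] ⨁ j, R ⧸ R ∙ p ^ e j :=
    g.trans (DFinsupp.mapRange.linearEquiv fun j => quotEquivOfEq _ _ (hspan j))
  have hle' : ∀ i : ℕ, pHeight p (p ^ i • g' a) ≤ pHeight p (p ^ i • g' b) := fun i => by
    simpa only [← map_smul, pHeight_map_linearEquiv] using hle i
  obtain ⟨φ, hφ⟩ := exists_linearMap_apply_eq_of_pHeight_le_directSum hp hle'
  exact ⟨g'.symm.toLinearMap ∘ₗ φ ∘ₗ g'.toLinearMap, by simp [hφ]⟩

end DVR

/-- in a finite module of exponent p^k, two elements degenerate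
to each other iff their Ulm sequences agree up to index k. -/
theorem mutual_degeneration_iff_ulm_eq {R A : Type*} [CommRing R] [IsDomain R]
    [IsDiscreteValuationRing R] [AddCommGroup A] [Module R A] [Finite A]
    (p : R) (hp : Irreducible p) (k : ℕ) (hbd : ∀ x : A, p ^ k • x = 0)
    (a b : A) :
    ((∃ φ : A →ₗ[R] A, φ a = b) ∧ (∃ ψ : A →ₗ[R] A, ψ b = a)) ↔
    (∀ i : ℕ, i ≤ k → pHeight p (p ^ i • a) = pHeight p (p ^ i • b)) := by
  have hmap : ∀ (φ : A →ₗ[R] A) x i, pHeight p (p ^ i • x) ≤ pHeight p (p ^ i • φ x) :=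
    fun φ x i => by simpa only [map_smul] using pHeight_le_pHeight_map φ (p ^ i • x)
  refine ⟨fun ⟨⟨φ, hφ⟩, ⟨ψ, hψ⟩⟩ i _ => le_antisymm (hφ ▸ hmap φ a i) (hψ ▸ hmap ψ b i),
    fun h => ?_⟩
  have hall : ∀ i, pHeight p (p ^ i • a) = pHeight p (p ^ i • b) := by
    intro i
    rcases le_or_gt i k with hik | hki
    · exact h i hik
    · rw [← Nat.sub_add_cancel hki.le, pow_add, mul_smul, mul_smul, hbd, hbd]
  have hA : Module.IsTorsion R A := fun x =>
    ⟨⟨p ^ k, pow_mem (mem_nonZeroDivisors_of_ne_zero hp.ne_zero) k⟩, hbd x⟩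
  exact ⟨exists_linearMap_apply_eq_of_pHeight_le hp hA fun i => (hall i).le,
    exists_linearMap_apply_eq_of_pHeight_le hp hA fun i => (hall i).ge⟩
end
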